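/- Fix β ∈ ℕ with β ≥ 1 and θ > 0, and let X have the generalized normal density q_θ(x) = (β θ^{1/(2β)}/Γ(1/(2β))) exp(−θ x^{2β}) on ℝ. Define u_θ(x) := −(2β(2β−1) θ^{−1+1/β} Γ(1−1/(2β))/Γ(1/(2β))) x + 2β x^{2β−1}. Then u_θ is W-orthogonal to the score matching test function x ↦ −2β x^{2β−1}: E_θ[(−2β X^{2β−1}) · u_θ(X)] = 0. Equivalently, using the moments E_θ[X^{2β}] = 1/(2βθ) and E_θ[X^{4β−2}] = θ^{−2+1/β} Γ(2 − 1/(2β))/Γ(1/(2β)), one has E_θ[X^{2β−1} u_θ(X)] = 0. (For β = 1, u_θ ≡ 0.) -/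

import Mathlib

open MeasureTheory Real

/-- Generalized normal density `q_θ(x) = β θ^{1/(2β)}/Γ(1/(2β)) · exp(−θ x^{2β})`. -/
noncomputable def gnDens (β : ℕ) (θ x : ℝ) : ℝ :=
  (β : ℝ) * θ ^ (1 / (2 * (β : ℝ))) / Real.Gamma (1 / (2 * (β : ℝ)))
    * Real.exp (-θ * x ^ (2 * β))

/-- The W-orthogonal element
`u_θ(x) = −(2β(2β−1) θ^{−1+1/β} Γ(1−1/(2β))/Γ(1/(2β))) x + 2β x^{2β−1}`. -/
noncomputable def uGN (β : ℕ) (θ x : ℝ) : ℝ :=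
  -(2 * (β : ℝ) * (2 * (β : ℝ) - 1) * θ ^ (-1 + 1 / (β : ℝ))
      * Real.Gamma (1 - 1 / (2 * (β : ℝ))) / Real.Gamma (1 / (2 * (β : ℝ)))) * x
    + 2 * (β : ℝ) * x ^ (2 * β - 1)

/-!
Every moment that occurs is an even moment, and the substitution `y = θ x^{2β}` on the half line
gives `E_θ[X^{2k}] = θ^{-k/β} Γ((2k+1)/(2β)) / Γ(1/(2β))`. By `Γ(1 + 1/(2β)) = Γ(1/(2β))/(2β)` and
`Γ(2 - 1/(2β)) = (1 - 1/(2β)) Γ(1 - 1/(2β))`, both terms of `E_θ[X^{2β-1} u_θ(X)]` equal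
`±(2β-1) θ^{-2+1/β} Γ(1-1/(2β)) / Γ(1/(2β))`, so they cancel.
-/

theorem integrable_comp_abs {f : ℝ → ℝ} (hf : IntegrableOn (fun x => f |x|) (Set.Ioi 0)) :
    Integrable (fun x => f |x|) := by
  have hIic : IntegrableOn (fun x ↦ f |x|) (Set.Iic 0) := by
    rw [← Measure.map_neg_eq_self (volume : Measure ℝ),
      (measurableEmbedding_neg (α := ℝ)).integrableOn_map_iff]
    simp_rw [Function.comp_def, abs_neg, Set.neg_preimage, Set.neg_Iic, neg_zero]
    exact (integrableOn_Ici_iff_integrableOn_Ioi).2 hf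
  rw [← integrableOn_univ, ← Set.Iic_union_Ioi (a := (0 : ℝ))]
  exact hIic.union hf

section EvenMoments

variable {β : ℕ} (hβ : 0 < β) {θ : ℝ} (hθ : 0 < θ) (k : ℕ)

include hβ hθ

theorem integrableOn_Ioi_pow_mul_exp_neg_mul_pow :
    IntegrableOn (fun x : ℝ => x ^ (2 * k) * exp (-θ * x ^ (2 * β))) (Set.Ioi 0) := by
  have := integrableOn_rpow_mul_exp_neg_mul_rpow (s := ((2 * k : ℕ) : ℝ))
    (p := ((2 * β : ℕ) : ℝ)) (by linarith [(2 * k).cast_nonneg (α := ℝ)]) (by positivity) hθ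
  simpa only [rpow_natCast] using this

theorem integrable_pow_mul_exp_neg_mul_pow :
    Integrable (fun x : ℝ => x ^ (2 * k) * exp (-θ * x ^ (2 * β))) := by
  have h := integrable_comp_abs (integrableOn_Ioi_pow_mul_exp_neg_mul_pow hβ hθ k |>.congr_fun
    (fun x hx => by rw [abs_of_pos hx]) measurableSet_Ioi)
  simpa only [(even_two_mul _).pow_abs] using h

theorem integral_pow_mul_exp_neg_mul_pow :
    ∫ x : ℝ, x ^ (2 * k) * exp (-θ * x ^ (2 * β)) =
      θ ^ (-(2 * k + 1) / (2 * β : ℝ)) * Gamma ((2 * k + 1) / (2 * β)) / β := by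
  have h := integral_comp_abs (f := fun x : ℝ => x ^ (2 * k) * exp (-θ * x ^ (2 * β)))
  simp only [(even_two_mul _).pow_abs] at h
  have hrpow : ∫ x in Set.Ioi 0, x ^ (2 * k) * exp (-θ * x ^ (2 * β)) =
      ∫ x in Set.Ioi 0, x ^ ((2 * k : ℕ) : ℝ) * exp (-θ * x ^ ((2 * β : ℕ) : ℝ)) := by
    simp only [rpow_natCast]
  rw [h, hrpow, integral_rpow_mul_exp_neg_mul_rpow (by positivity)
    (by linarith [(2 * k).cast_nonneg (α := ℝ)]) hθ]
  push_cast
  field_simp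

theorem integrable_gnDens_mul_pow :
    Integrable (fun x => gnDens β θ x * x ^ (2 * k)) := by
  refine ((integrable_pow_mul_exp_neg_mul_pow hβ hθ k).const_mul
    ((β : ℝ) * θ ^ (1 / (2 * (β : ℝ))) / Gamma (1 / (2 * (β : ℝ))))).congr
    (Filter.Eventually.of_forall fun x => ?_)
  simp only [gnDens]
  ring

theorem integral_gnDens_mul_pow :
    ∫ x, gnDens β θ x * x ^ (2 * k) =
      θ ^ (-(k : ℝ) / β) * Gamma ((2 * k + 1) / (2 * β)) / Gamma (1 / (2 * β)) := by
  have hθpow : θ ^ (1 / (2 * (β : ℝ))) * θ ^ (-(2 * k + 1) / (2 * β : ℝ)) = θ ^ (-(k : ℝ) / β) := by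
    rw [← rpow_add hθ]
    congr 1
    field_simp
    ring
  have hfun : (fun x => gnDens β θ x * x ^ (2 * k)) = fun x =>
      (β : ℝ) * θ ^ (1 / (2 * (β : ℝ))) / Gamma (1 / (2 * (β : ℝ))) *
        (x ^ (2 * k) * exp (-θ * x ^ (2 * β))) := by
    funext x
    simp only [gnDens]
    ring
  rw [hfun, integral_const_mul, integral_pow_mul_exp_neg_mul_pow hβ hθ, ← hθpow]
  field_simp

end EvenMoments

theorem Real.Gamma_two_sub {s : ℝ} (hs : s ≠ 1) : Gamma (2 - s) = (1 - s) * Gamma (1 - s) := by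
  rw [← Gamma_add_one (sub_ne_zero.mpr hs.symm)]
  ring_nf

section Moments

variable {β : ℕ} (hβ : 1 ≤ β) {θ : ℝ} (hθ : 0 < θ)

include hβ hθ

theorem integral_gnDens_mul_pow_two_mul_self :
    ∫ x, gnDens β θ x * x ^ (2 * β) = 1 / (2 * β * θ) := by
  have hG : Gamma ((2 * β + 1) / (2 * β)) = Gamma (1 / (2 * β)) / (2 * β) := by
    rw [show (2 * β + 1) / (2 * β : ℝ) = 1 / (2 * β) + 1 by field_simp; ring,
      Gamma_add_one (by positivity)]
    ring
  rw [integral_gnDens_mul_pow (by omega) hθ β, neg_div, div_self (by positivity), rpow_neg_one, hG]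
  field_simp [(Gamma_pos_of_pos (by positivity : (0 : ℝ) < 1 / (2 * β))).ne']

theorem integral_gnDens_mul_pow_four_mul_sub_two :
    ∫ x, gnDens β θ x * x ^ (4 * β - 2) =
      θ ^ (-2 + 1 / (β : ℝ)) * Gamma (2 - 1 / (2 * β)) / Gamma (1 / (2 * β)) := by
  have hk : ((2 * β - 1 : ℕ) : ℝ) = 2 * β - 1 := by
    rw [Nat.cast_sub (by omega)]
    push_cast
    ring
  rw [show 4 * β - 2 = 2 * (2 * β - 1) by omega, integral_gnDens_mul_pow (by omega) hθ, hk]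
  congr 3 <;> field_simp <;> ring

theorem integral_gnDens_mul_pow_mul_linear (a b : ℝ) :
    ∫ x, gnDens β θ x * (x ^ (2 * β - 1) * (a * x + b * x ^ (2 * β - 1))) =
      a * (1 / (2 * β * θ)) +
        b * (θ ^ (-2 + 1 / (β : ℝ)) * Gamma (2 - 1 / (2 * β)) / Gamma (1 / (2 * β))) := by
  have hexpand : ∀ x : ℝ, gnDens β θ x * (x ^ (2 * β - 1) * (a * x + b * x ^ (2 * β - 1))) =
      a * (gnDens β θ x * x ^ (2 * β)) + b * (gnDens β θ x * x ^ (2 * (2 * β - 1))) := by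
    intro x
    obtain ⟨n, hn⟩ : ∃ n, 2 * β = n + 1 := ⟨2 * β - 1, by omega⟩
    rw [hn, Nat.add_sub_cancel, pow_succ, two_mul, pow_add]
    ring
  have hpow : 2 * (2 * β - 1) = 4 * β - 2 := by omega
  simp only [hexpand]
  rw [integral_add ((integrable_gnDens_mul_pow (by omega) hθ β).const_mul a)
      ((integrable_gnDens_mul_pow (by omega) hθ _).const_mul b),
    integral_const_mul, integral_const_mul, hpow, integral_gnDens_mul_pow_two_mul_self hβ hθ,
    integral_gnDens_mul_pow_four_mul_sub_two hβ hθ]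

end Moments

/-- for the generalized normal distribution, `u_θ` is W-orthogonal to the score
matching test function `x ↦ −2β x^{2β−1}`, i.e. `E_θ[(−2β X^{2β−1}) u_θ(X)] = 0`; equivalently,
using `E_θ[X^{2β}] = 1/(2βθ)` and `E_θ[X^{4β−2}] = θ^{−2+1/β} Γ(2−1/(2β))/Γ(1/(2β))`,
`E_θ[X^{2β−1} u_θ(X)] = 0`. For β = 1, `u_θ ≡ 0`. -/
theorem stmt16 (β : ℕ) (hβ : 1 ≤ β) (θ : ℝ) (hθ : 0 < θ) :
    (∫ x : ℝ, gnDens β θ x * x ^ (2 * β)) = 1 / (2 * (β : ℝ) * θ)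
    ∧ (∫ x : ℝ, gnDens β θ x * x ^ (4 * β - 2))
        = θ ^ (-2 + 1 / (β : ℝ)) * Real.Gamma (2 - 1 / (2 * (β : ℝ)))
            / Real.Gamma (1 / (2 * (β : ℝ)))
    ∧ (∫ x : ℝ, gnDens β θ x * ((-(2 * (β : ℝ)) * x ^ (2 * β - 1)) * uGN β θ x)) = 0
    ∧ (∫ x : ℝ, gnDens β θ x * (x ^ (2 * β - 1) * uGN β θ x)) = 0
    ∧ (β = 1 → ∀ x : ℝ, uGN β θ x = 0) := by
  have hθpow : θ ^ (-2 + 1 / (β : ℝ)) = θ ^ (-1 + 1 / (β : ℝ)) / θ := by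
    rw [← rpow_sub_one hθ.ne']
    ring_nf
  have horth : ∫ x, gnDens β θ x * (x ^ (2 * β - 1) * uGN β θ x) = 0 := by
    unfold uGN
    rw [integral_gnDens_mul_pow_mul_linear hβ hθ, hθpow,
      Real.Gamma_two_sub (by rw [ne_eq, div_eq_one_iff_eq (by positivity)]; norm_cast; omega)]
    field_simp
    ring
  refine ⟨integral_gnDens_mul_pow_two_mul_self hβ hθ,
    integral_gnDens_mul_pow_four_mul_sub_two hβ hθ, ?_, horth, ?_⟩
  · simp only [mul_assoc, mul_left_comm (gnDens β θ _) (-(2 * (β : ℝ))), integral_const_mul,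
      horth, mul_zero]
  · rintro rfl x
    norm_num [uGN, (Gamma_pos_of_pos (by norm_num : (0 : ℝ) < 1 / 2)).ne']
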